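/- arXiv:2511.04991 — 2 statements merged into one kernel-verified Lean document; each statement's English description precedes it below -/
import Mathlib

section
/- Let ε > 0, let ρ̃ : ℝ² → ℝ, j̃, w̃ : ℝ³ → ℝ, d₁ : ℝ² → ℝ and d₂, d₃ : ℝ³ → ℝ be functions such that all written partial derivatives exist and all written integrals over v ∈ [0,1] exist. Suppose that for all (t,x) and all v ∈ [0,1]: (i) ∂_t ρ̃(t,x) + ∫₀¹ v ∂_x j̃(t,x,v) dv = d₁(t,x); (ii) ε² ∂_t j̃ + j̃ + v ∂_x ρ̃ + ε² v ∂_x w̃ = d₂; (iii) ε² ∂_t w̃ + w̃ + v ∂_x j̃ − ∫₀¹ v′ ∂_x j̃(t,x,v′) dv′ = d₃. Then the reconstructed function f̃(t,x,v) := ρ̃(t,x) + ε j̃(t,x,v) + ε² w̃(t,x,v) satisfies, for all (t,x) and v ∈ [0,1], the perturbed kinetic equation ε² ∂_t f̃ + ε v ∂_x f̃ = (ρ̃ − f̃) + ε² d₁ + ε d₂ + ε² d₃. -/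
open MeasureTheory

/-- If `(ρ, j, w)` satisfies the one-dimensional multiscale parity decomposition
system with residuals `(d₁, d₂, d₃)`, then the reconstructed distribution
`f = ρ + ε j + ε² w` satisfies the perturbed kinetic equation
`ε² ∂ₜ f + ε v ∂ₓ f = (ρ − f) + ε² d₁ + ε d₂ + ε² d₃`. -/
theorem reconstructed_perturbed_kinetic_equation
    (ε : ℝ) (hε : 0 < ε)
    (ρ : ℝ → ℝ → ℝ) (j w : ℝ → ℝ → ℝ → ℝ)
    (d₁ : ℝ → ℝ → ℝ) (d₂ d₃ : ℝ → ℝ → ℝ → ℝ)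
    -- existence of all written partial derivatives
    (hρt : ∀ t x, DifferentiableAt ℝ (fun s => ρ s x) t)
    (hρx : ∀ t x, DifferentiableAt ℝ (fun y => ρ t y) x)
    (hjt : ∀ t x v, DifferentiableAt ℝ (fun s => j s x v) t)
    (hjx : ∀ t x v, DifferentiableAt ℝ (fun y => j t y v) x)
    (hwt : ∀ t x v, DifferentiableAt ℝ (fun s => w s x v) t)
    (hwx : ∀ t x v, DifferentiableAt ℝ (fun y => w t y v) x)
    -- existence of all written velocity integrals
    (hint : ∀ t x, IntervalIntegrable
      (fun v => v * deriv (fun y => j t y v) x) volume 0 1)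
    -- (i) density equation with residual d₁
    (heq1 : ∀ t x,
      deriv (fun s => ρ s x) t
        + (∫ v in (0:ℝ)..1, v * deriv (fun y => j t y v) x) = d₁ t x)
    -- (ii) flux equation with residual d₂
    (heq2 : ∀ t x, ∀ v ∈ Set.Icc (0:ℝ) 1,
      ε ^ 2 * deriv (fun s => j s x v) t + j t x v
        + v * deriv (fun y => ρ t y) x
        + ε ^ 2 * v * deriv (fun y => w t y v) x = d₂ t x v)
    -- (iii) correction equation with residual d₃
    (heq3 : ∀ t x, ∀ v ∈ Set.Icc (0:ℝ) 1,
      ε ^ 2 * deriv (fun s => w s x v) t + w t x v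
        + v * deriv (fun y => j t y v) x
        - (∫ v' in (0:ℝ)..1, v' * deriv (fun y => j t y v') x) = d₃ t x v) :
    ∀ t x, ∀ v ∈ Set.Icc (0:ℝ) 1,
      ε ^ 2 * deriv (fun s => ρ s x + ε * j s x v + ε ^ 2 * w s x v) t
        + ε * v * deriv (fun y => ρ t y + ε * j t y v + ε ^ 2 * w t y v) x
      = (ρ t x - (ρ t x + ε * j t x v + ε ^ 2 * w t x v))
        + ε ^ 2 * d₁ t x + ε * d₂ t x v + ε ^ 2 * d₃ t x v := by
  intro t x v hv
  have Dt : deriv (fun s => ρ s x + ε * j s x v + ε ^ 2 * w s x v) t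
      = deriv (fun s => ρ s x) t + ε * deriv (fun s => j s x v) t
        + ε ^ 2 * deriv (fun s => w s x v) t :=
    (((hρt t x).hasDerivAt.add ((hjt t x v).hasDerivAt.const_mul ε)).add
      ((hwt t x v).hasDerivAt.const_mul (ε ^ 2))).deriv
  have Dx : deriv (fun y => ρ t y + ε * j t y v + ε ^ 2 * w t y v) x
      = deriv (fun y => ρ t y) x + ε * deriv (fun y => j t y v) x
        + ε ^ 2 * deriv (fun y => w t y v) x :=
    (((hρx t x).hasDerivAt.add ((hjx t x v).hasDerivAt.const_mul ε)).add
      ((hwx t x v).hasDerivAt.const_mul (ε ^ 2))).deriv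
  have h1 := heq1 t x
  have h2 := heq2 t x v hv
  have h3 := heq3 t x v hv
  rw [Dt, Dx]
  nlinarith [sq_nonneg ε]
end

section
/- Let ε, ξ, η ∈ ℝ and let ρ̃, w̃, φ̃, j̃₁, j̃₂ be real-valued differentiable functions of (x,y) ∈ ℝ². Define I₁ := 2( ξ ∂_x(j̃₁+j̃₂) + η ∂_y(j̃₂−j̃₁) ) ρ̃ + 2ε²( ξ ∂_x(j̃₁+j̃₂) + η ∂_y(j̃₂−j̃₁) ) w̃ + ( ξ ∂_x(j̃₂−j̃₁) + η ∂_y(j̃₁+j̃₂) ) φ̃ and I₂ := ( 2ξ ∂_x(ρ̃+ε²w̃) + η ∂_y φ̃ )(j̃₁+j̃₂) + ( ξ ∂_x φ̃ + 2η ∂_y(ρ̃+ε²w̃) )(j̃₂−j̃₁). Then pointwise I₁ + I₂ = ξ ∂_x( (j̃₂−j̃₁) φ̃ ) + η ∂_y( (j̃₁+j̃₂) φ̃ ) + 2ξ ∂_x( (ρ̃+ε²w̃)(j̃₁+j̃₂) ) + 2η ∂_y( (ρ̃+ε²w̃)(j̃₂−j̃₁) ); in particular, if all these functions are 1-periodic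 in both x and y, then ∫₀¹∫₀¹ (I₁+I₂) dx dy = 0. -/
/-!
With `A = ρ + ε²w`, `J₊ = j₁ + j₂` and `J₋ = j₂ - j₁`, the cross terms in each direction are
exactly the two Leibniz expansions of `∂(J₋φ)` and `2∂(A J₊)` (resp. `∂(J₊φ)` and `2∂(A J₋)`),
so `I₁ + I₂ = ∂ₓP + ∂_yQ`. Over a period cell, the fundamental theorem of calculus in `x` and
periodicity of `P` kill `∫∫ ∂ₓP`; after Fubini the same argument in `y` kills `∫∫ ∂_yQ`.
-/

open MeasureTheory Function

/-- The sum of cross terms `I₁` arising from the density, correction and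
anisotropy energy identities in the two-dimensional refined error analysis. -/
noncomputable def crossI₁ (ε ξ η : ℝ) (ρ w φ j₁ j₂ : ℝ → ℝ → ℝ) (x y : ℝ) : ℝ :=
  2 * (ξ * deriv (fun x' => j₁ x' y + j₂ x' y) x
        + η * deriv (fun y' => j₂ x y' - j₁ x y') y) * ρ x y
    + 2 * ε ^ 2 * (ξ * deriv (fun x' => j₁ x' y + j₂ x' y) x
        + η * deriv (fun y' => j₂ x y' - j₁ x y') y) * w x y
    + (ξ * deriv (fun x' => j₂ x' y - j₁ x' y) x
        + η * deriv (fun y' => j₁ x y' + j₂ x y') y) * φ x y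

/-- The sum of cross terms `I₂` arising from the two flux energy identities in
the two-dimensional refined error analysis. -/
noncomputable def crossI₂ (ε ξ η : ℝ) (ρ w φ j₁ j₂ : ℝ → ℝ → ℝ) (x y : ℝ) : ℝ :=
  (2 * ξ * deriv (fun x' => ρ x' y + ε ^ 2 * w x' y) x
      + η * deriv (fun y' => φ x y') y) * (j₁ x y + j₂ x y)
    + (ξ * deriv (fun x' => φ x' y) x
        + 2 * η * deriv (fun y' => ρ x y' + ε ^ 2 * w x y') y)
      * (j₂ x y - j₁ x y)

section PartialDerivatives

variable {E : Type*} [NormedAddCommGroup E] [NormedSpace ℝ E] {F : ℝ → ℝ → E}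

theorem hasDerivAt_slice_fst {x y : ℝ} (hF : DifferentiableAt ℝ (uncurry F) (x, y)) :
    HasDerivAt (fun x' => F x' y) (fderiv ℝ (uncurry F) (x, y) (1, 0)) x :=
  hF.hasFDerivAt.comp_hasDerivAt (f := fun x' => (x', y)) x
    ((hasDerivAt_id' x).prodMk (hasDerivAt_const x y))

theorem hasDerivAt_slice_snd {x y : ℝ} (hF : DifferentiableAt ℝ (uncurry F) (x, y)) :
    HasDerivAt (fun y' => F x y') (fderiv ℝ (uncurry F) (x, y) (0, 1)) y :=
  hF.hasFDerivAt.comp_hasDerivAt (f := fun y' => (x, y')) y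
    ((hasDerivAt_const y x).prodMk (hasDerivAt_id' y))

theorem differentiableAt_slice_fst {x y : ℝ} (hF : DifferentiableAt ℝ (uncurry F) (x, y)) :
    DifferentiableAt ℝ (fun x' => F x' y) x :=
  (hasDerivAt_slice_fst hF).differentiableAt

theorem differentiableAt_slice_snd {x y : ℝ} (hF : DifferentiableAt ℝ (uncurry F) (x, y)) :
    DifferentiableAt ℝ (fun y' => F x y') y :=
  (hasDerivAt_slice_snd hF).differentiableAt

theorem continuous_deriv_slice_fst (hF : ContDiff ℝ 1 (uncurry F)) :
    Continuous (fun p : ℝ × ℝ => deriv (fun x' => F x' p.2) p.1) := by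
  have hF' := hF.differentiable one_ne_zero
  simp only [fun p : ℝ × ℝ => (hasDerivAt_slice_fst (hF' p)).deriv]
  exact (hF.continuous_fderiv one_ne_zero).clm_apply continuous_const

theorem continuous_deriv_slice_snd (hF : ContDiff ℝ 1 (uncurry F)) :
    Continuous (fun p : ℝ × ℝ => deriv (fun y' => F p.1 y') p.2) := by
  have hF' := hF.differentiable one_ne_zero
  simp only [fun p : ℝ × ℝ => (hasDerivAt_slice_snd (hF' p)).deriv]
  exact (hF.continuous_fderiv one_ne_zero).clm_apply continuous_const

end PartialDerivatives

theorem Function.Periodic.intervalIntegral_eq_zero_of_hasDerivAt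
    {E : Type*} [NormedAddCommGroup E] [NormedSpace ℝ E] [CompleteSpace E]
    {f f' : ℝ → E} {T : ℝ} (hf : Periodic f T) (hderiv : ∀ x, HasDerivAt f (f' x) x)
    (a : ℝ) (hint : IntervalIntegrable f' volume a (a + T)) :
    ∫ x in a..a + T, f' x = 0 := by
  rw [intervalIntegral.integral_eq_sub_of_hasDerivAt (fun x _ => hderiv x) hint, hf a, sub_self]

theorem intervalIntegral_intervalIntegral_swap_of_continuous
    {E : Type*} [NormedAddCommGroup E] [NormedSpace ℝ E]
    {G : ℝ → ℝ → E} (hG : Continuous (uncurry G)) (a b c d : ℝ) :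
    ∫ x in a..b, ∫ y in c..d, G x y = ∫ y in c..d, ∫ x in a..b, G x y :=
  intervalIntegral_intervalIntegral_swap <|
    (hG.continuousOn.integrableOn_compact (isCompact_uIcc.prod isCompact_uIcc)).mono_set
      (Set.prod_mono Set.uIoc_subset_uIcc Set.uIoc_subset_uIcc)

theorem intervalIntegral_divergence_eq_zero_of_periodic
    {E : Type*} [NormedAddCommGroup E] [NormedSpace ℝ E] [CompleteSpace E]
    {P Q P' Q' : ℝ → ℝ → E} {S T : ℝ}
    (hP : ∀ x y, HasDerivAt (fun x' => P x' y) (P' x y) x)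
    (hQ : ∀ x y, HasDerivAt (fun y' => Q x y') (Q' x y) y)
    (hP' : Continuous (uncurry P')) (hQ' : Continuous (uncurry Q'))
    (hPper : ∀ y, Periodic (fun x => P x y) S) (hQper : ∀ x, Periodic (fun y => Q x y) T)
    (a b : ℝ) :
    ∫ y in b..b + T, ∫ x in a..a + S, (P' x y + Q' x y) = 0 := by
  have hP'int : ∀ y, IntervalIntegrable (fun x => P' x y) volume a (a + S) := fun y =>
    (hP'.comp (continuous_id.prodMk continuous_const)).intervalIntegrable _ _
  have hQ'int : ∀ y, IntervalIntegrable (fun x => Q' x y) volume a (a + S) := fun y =>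
    (hQ'.comp (continuous_id.prodMk continuous_const)).intervalIntegrable _ _
  have hQ'int' : ∀ x, IntervalIntegrable (fun y => Q' x y) volume b (b + T) := fun x =>
    (hQ'.comp (continuous_const.prodMk continuous_id)).intervalIntegrable _ _
  calc ∫ y in b..b + T, ∫ x in a..a + S, (P' x y + Q' x y)
      = ∫ y in b..b + T, ∫ x in a..a + S, Q' x y := by
        refine intervalIntegral.integral_congr fun y _ => ?_
        simp only [intervalIntegral.integral_add (hP'int y) (hQ'int y),
          (hPper y).intervalIntegral_eq_zero_of_hasDerivAt (fun x => hP x y) a (hP'int y),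
          zero_add]
    _ = ∫ x in a..a + S, ∫ y in b..b + T, Q' x y :=
        (intervalIntegral_intervalIntegral_swap_of_continuous hQ' _ _ _ _).symm
    _ = 0 := by
        simp only [fun x => (hQper x).intervalIntegral_eq_zero_of_hasDerivAt (hQ x) b (hQ'int' x),
          intervalIntegral.integral_zero]

theorem crossI₁_add_crossI₂ (ε ξ η : ℝ) (ρ w φ j₁ j₂ : ℝ → ℝ → ℝ) (x y : ℝ)
    (hρ : DifferentiableAt ℝ (uncurry ρ) (x, y)) (hw : DifferentiableAt ℝ (uncurry w) (x, y))
    (hφ : DifferentiableAt ℝ (uncurry φ) (x, y)) (hj₁ : DifferentiableAt ℝ (uncurry j₁) (x, y))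
    (hj₂ : DifferentiableAt ℝ (uncurry j₂) (x, y)) :
    crossI₁ ε ξ η ρ w φ j₁ j₂ x y + crossI₂ ε ξ η ρ w φ j₁ j₂ x y
      = ξ * deriv (fun x' => (j₂ x' y - j₁ x' y) * φ x' y) x
        + η * deriv (fun y' => (j₁ x y' + j₂ x y') * φ x y') y
        + 2 * ξ * deriv (fun x' => (ρ x' y + ε ^ 2 * w x' y) * (j₁ x' y + j₂ x' y)) x
        + 2 * η * deriv (fun y' => (ρ x y' + ε ^ 2 * w x y') * (j₂ x y' - j₁ x y')) y := by
  have hx {F : ℝ → ℝ → ℝ} := @differentiableAt_slice_fst ℝ _ _ F x y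
  have hy {F : ℝ → ℝ → ℝ} := @differentiableAt_slice_snd ℝ _ _ F x y
  rw [deriv_fun_mul ((hx hj₂).fun_sub (hx hj₁)) (hx hφ),
    deriv_fun_mul ((hy hj₁).fun_add (hy hj₂)) (hy hφ),
    deriv_fun_mul ((hx hρ).fun_add ((hx hw).const_mul _)) ((hx hj₁).fun_add (hx hj₂)),
    deriv_fun_mul ((hy hρ).fun_add ((hy hw).const_mul _)) ((hy hj₂).fun_sub (hy hj₁))]
  unfold crossI₁ crossI₂
  ring

theorem integral_crossI₁_add_crossI₂_eq_zero (ε ξ η : ℝ) (ρ w φ j₁ j₂ : ℝ → ℝ → ℝ)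
    (hρ : ContDiff ℝ 1 (uncurry ρ)) (hw : ContDiff ℝ 1 (uncurry w))
    (hφ : ContDiff ℝ 1 (uncurry φ)) (hj₁ : ContDiff ℝ 1 (uncurry j₁))
    (hj₂ : ContDiff ℝ 1 (uncurry j₂))
    (hρx : ∀ y, Periodic (fun x => ρ x y) 1) (hρy : ∀ x, Periodic (fun y => ρ x y) 1)
    (hwx : ∀ y, Periodic (fun x => w x y) 1) (hwy : ∀ x, Periodic (fun y => w x y) 1)
    (hφx : ∀ y, Periodic (fun x => φ x y) 1) (hφy : ∀ x, Periodic (fun y => φ x y) 1)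
    (hj₁x : ∀ y, Periodic (fun x => j₁ x y) 1) (hj₁y : ∀ x, Periodic (fun y => j₁ x y) 1)
    (hj₂x : ∀ y, Periodic (fun x => j₂ x y) 1) (hj₂y : ∀ x, Periodic (fun y => j₂ x y) 1) :
    ∫ y in (0:ℝ)..1, ∫ x in (0:ℝ)..1,
      (crossI₁ ε ξ η ρ w φ j₁ j₂ x y + crossI₂ ε ξ η ρ w φ j₁ j₂ x y) = 0 := by
  have hA := hρ.add (contDiff_const (c := ε ^ 2) |>.mul hw)
  have h₁ : ContDiff ℝ 1 (uncurry fun x y => (j₂ x y - j₁ x y) * φ x y) :=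
    (hj₂.sub hj₁).mul hφ
  have h₂ : ContDiff ℝ 1 (uncurry fun x y => (j₁ x y + j₂ x y) * φ x y) :=
    (hj₁.add hj₂).mul hφ
  have h₃ : ContDiff ℝ 1 (uncurry fun x y => (ρ x y + ε ^ 2 * w x y) * (j₁ x y + j₂ x y)) :=
    hA.mul (hj₁.add hj₂)
  have h₄ : ContDiff ℝ 1 (uncurry fun x y => (ρ x y + ε ^ 2 * w x y) * (j₂ x y - j₁ x y)) :=
    hA.mul (hj₂.sub hj₁)
  have hslice_fst {F : ℝ → ℝ → ℝ} (hF : ContDiff ℝ 1 (uncurry F)) (x y : ℝ) :=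
    (differentiableAt_slice_fst (hF.differentiable one_ne_zero (x, y))).hasDerivAt
  have hslice_snd {F : ℝ → ℝ → ℝ} (hF : ContDiff ℝ 1 (uncurry F)) (x y : ℝ) :=
    (differentiableAt_slice_snd (hF.differentiable one_ne_zero (x, y))).hasDerivAt
  have hdiv := intervalIntegral_divergence_eq_zero_of_periodic
    (P := fun x y => ξ * ((j₂ x y - j₁ x y) * φ x y)
      + 2 * ξ * ((ρ x y + ε ^ 2 * w x y) * (j₁ x y + j₂ x y)))
    (Q := fun x y => η * ((j₁ x y + j₂ x y) * φ x y)
      + 2 * η * ((ρ x y + ε ^ 2 * w x y) * (j₂ x y - j₁ x y))) (S := 1) (T := 1)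
    (fun x y => ((hslice_fst h₁ x y).const_mul ξ).add ((hslice_fst h₃ x y).const_mul (2 * ξ)))
    (fun x y => ((hslice_snd h₂ x y).const_mul η).add ((hslice_snd h₄ x y).const_mul (2 * η)))
    ((continuous_const.fun_mul (continuous_deriv_slice_fst h₁)).fun_add
      (continuous_const.fun_mul (continuous_deriv_slice_fst h₃)))
    ((continuous_const.fun_mul (continuous_deriv_slice_snd h₂)).fun_add
      (continuous_const.fun_mul (continuous_deriv_slice_snd h₄)))
    (fun y x => by simp only [hρx y x, hwx y x, hφx y x, hj₁x y x, hj₂x y x])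
    (fun x y => by simp only [hρy x y, hwy x y, hφy x y, hj₁y x y, hj₂y x y]) 0 0
  rw [zero_add] at hdiv
  refine (intervalIntegral.integral_congr fun y _ =>
    intervalIntegral.integral_congr fun x _ => ?_).trans hdiv
  rw [crossI₁_add_crossI₂ ε ξ η ρ w φ j₁ j₂ x y (hρ.differentiable one_ne_zero _)
    (hw.differentiable one_ne_zero _) (hφ.differentiable one_ne_zero _)
    (hj₁.differentiable one_ne_zero _) (hj₂.differentiable one_ne_zero _)]
  ring

/-- Pointwise, `I₁ + I₂` is a divergence; in particular its integral over the
periodic cell `[0,1]²` vanishes for 1-periodic data. -/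
theorem cross_terms_divergence_2d
    (ε ξ η : ℝ) (ρ w φ j₁ j₂ : ℝ → ℝ → ℝ)
    (hρ : ContDiff ℝ 1 (fun p : ℝ × ℝ => ρ p.1 p.2))
    (hw : ContDiff ℝ 1 (fun p : ℝ × ℝ => w p.1 p.2))
    (hφ : ContDiff ℝ 1 (fun p : ℝ × ℝ => φ p.1 p.2))
    (hj₁ : ContDiff ℝ 1 (fun p : ℝ × ℝ => j₁ p.1 p.2))
    (hj₂ : ContDiff ℝ 1 (fun p : ℝ × ℝ => j₂ p.1 p.2)) :
    -- pointwise divergence identity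
    (∀ x y : ℝ,
      crossI₁ ε ξ η ρ w φ j₁ j₂ x y + crossI₂ ε ξ η ρ w φ j₁ j₂ x y
        = ξ * deriv (fun x' => (j₂ x' y - j₁ x' y) * φ x' y) x
          + η * deriv (fun y' => (j₁ x y' + j₂ x y') * φ x y') y
          + 2 * ξ * deriv
              (fun x' => (ρ x' y + ε ^ 2 * w x' y) * (j₁ x' y + j₂ x' y)) x
          + 2 * η * deriv
              (fun y' => (ρ x y' + ε ^ 2 * w x y') * (j₂ x y' - j₁ x y')) y)
    -- vanishing of the integral under 1-periodicity in x and y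
    ∧ ((∀ y, Function.Periodic (fun x => ρ x y) 1) →
        (∀ x, Function.Periodic (fun y => ρ x y) 1) →
        (∀ y, Function.Periodic (fun x => w x y) 1) →
        (∀ x, Function.Periodic (fun y => w x y) 1) →
        (∀ y, Function.Periodic (fun x => φ x y) 1) →
        (∀ x, Function.Periodic (fun y => φ x y) 1) →
        (∀ y, Function.Periodic (fun x => j₁ x y) 1) →
        (∀ x, Function.Periodic (fun y => j₁ x y) 1) →
        (∀ y, Function.Periodic (fun x => j₂ x y) 1) →
        (∀ x, Function.Periodic (fun y => j₂ x y) 1) →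
        (∫ y in (0:ℝ)..1, ∫ x in (0:ℝ)..1,
          (crossI₁ ε ξ η ρ w φ j₁ j₂ x y
            + crossI₂ ε ξ η ρ w φ j₁ j₂ x y)) = 0) := by
  refine ⟨fun x y => crossI₁_add_crossI₂ ε ξ η ρ w φ j₁ j₂ x y
    (hρ.differentiable one_ne_zero _) (hw.differentiable one_ne_zero _)
    (hφ.differentiable one_ne_zero _) (hj₁.differentiable one_ne_zero _)
    (hj₂.differentiable one_ne_zero _), ?_⟩
  exact integral_crossI₁_add_crossI₂_eq_zero ε ξ η ρ w φ j₁ j₂ hρ hw hφ hj₁ hj₂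
end
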